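/- arXiv:1602.06915 — 9 statements merged into one kernel-verified Lean document; each statement's English description precedes it below -/
import Mathlib

section
/- For nonempty words x, y over Σ, if the sets x·{x,y}* and y·{x,y}* have a common element, then xy = yx. -/
/-- k-fold concatenation (power) of a word. -/
def wpow {σ : Type*} (z : List σ) (k : ℕ) : List σ := (List.replicate k z).flatten

/-- A nonempty word is primitive if it is not a proper power. -/
def WPrimitive {σ : Type*} (w : List σ) : Prop :=
  w ≠ [] ∧ ∀ (v : List σ) (e : ℕ), 2 ≤ e → w ≠ wpow v e

theorem fin_pos_of_mul {p m : ℕ} (i : Fin (p * m)) : 0 < m :=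
  Nat.pos_of_ne_zero fun h => absurd i.isLt (by simp [h])

/-- `arrRep A p q` is `A^{p×q}`: the array `A` repeated in `p` rows and `q` columns. -/
def arrRep {σ : Type*} {m n : ℕ} (A : Fin m × Fin n → σ) (p q : ℕ) :
    Fin (p * m) × Fin (q * n) → σ :=
  fun x => A (⟨x.1.val % m, Nat.mod_lt _ (fin_pos_of_mul x.1)⟩,
              ⟨x.2.val % n, Nat.mod_lt _ (fin_pos_of_mul x.2)⟩)

/-- Equality of arrays of possibly (syntactically) different dimensions. -/
def arrEq {σ : Type*} {m n m' n' : ℕ} (A : Fin m × Fin n → σ)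
    (B : Fin m' × Fin n' → σ) : Prop :=
  m = m' ∧ n = n' ∧ ∀ (i j : ℕ) (h1 : i < m) (h2 : j < n) (h1' : i < m') (h2' : j < n'),
    A (⟨i, h1⟩, ⟨j, h2⟩) = B (⟨i, h1'⟩, ⟨j, h2'⟩)

/-- An array is primitive if it is not a nontrivial `p×q` repetition of another array. -/
def ArrPrimitive {σ : Type*} {m n : ℕ} (M : Fin m × Fin n → σ) : Prop :=
  ∀ (m' n' p q : ℕ) (A : Fin m' × Fin n' → σ), 0 < p → 0 < q →
    arrEq M (arrRep A p q) → p = 1 ∧ q = 1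

/-- Horizontal concatenation of arrays with equal numbers of rows. -/
def hcat {σ : Type*} {m1 m2 n1 n2 : ℕ} (h : m1 = m2)
    (A : Fin m1 × Fin n1 → σ) (B : Fin m2 × Fin n2 → σ) :
    Fin m1 × Fin (n1 + n2) → σ :=
  fun x => if hn : x.2.val < n1 then A (x.1, ⟨x.2.val, hn⟩)
           else B (⟨x.1.val, h ▸ x.1.isLt⟩, ⟨x.2.val - n1, by have := x.2.isLt; omega⟩)

/-- Vertical concatenation of arrays with equal numbers of columns. -/
def vcat {σ : Type*} {m1 m2 n1 n2 : ℕ} (h : n1 = n2)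
    (A : Fin m1 × Fin n1 → σ) (B : Fin m2 × Fin n2 → σ) :
    Fin (m1 + m2) × Fin n1 → σ :=
  fun x => if hm : x.1.val < m1 then A (⟨x.1.val, hm⟩, x.2)
           else B (⟨x.1.val - m1, by have := x.1.isLt; omega⟩, ⟨x.2.val, h ▸ x.2.isLt⟩)

/-- The word over the alphabet of columns corresponding to an array. -/
def colWord {σ : Type*} {m n : ℕ} (A : Fin m × Fin n → σ) : List (Fin m → σ) :=
  List.ofFn fun j => fun i => A (i, j)

/-- Row `i` of an array, as a word. -/
def rowWord {σ : Type*} {m n : ℕ} (A : Fin m × Fin n → σ) (i : Fin m) : List σ :=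
  List.ofFn fun j => A (i, j)

/-- Column `j` of an array, as a word. -/
def colAt {σ : Type*} {m n : ℕ} (A : Fin m × Fin n → σ) (j : Fin n) : List σ :=
  List.ofFn fun i => A (i, j)

/-- Row-major reading of an array. -/
def rowMajor {σ : Type*} {m n : ℕ} (A : Fin m × Fin n → σ) : List σ :=
  (List.ofFn fun i => rowWord A i).flatten

/-- `{x,y}*`: words that are concatenations of copies of `x` and `y`. -/
def InStar {σ : Type*} (x y w : List σ) : Prop :=
  ∃ L : List (List σ), (∀ u ∈ L, u = x ∨ u = y) ∧ w = L.flatten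

/-! If `|x| ≤ |y|` in `x u = y v`, then `y = x t` and cancelling `x` leaves `u = t v`. Every
element of `{x, x t}*` lies in `{x, t}*`, and a nonempty one starts with `x`, so `u = x u'` with
`u' ∈ {x, t}*` and `x u' = t v` is a shorter equation of the same kind. By induction `x t = t x`,
whence `x y = x x t = x t x = y x`. -/

namespace InStar

variable {σ : Type*} {x y t w : List σ}

@[elab_as_elim]
theorem induction_on {motive : List σ → Prop} (h : InStar x y w) (nil : motive [])
    (append_left : ∀ w, InStar x y w → motive w → motive (x ++ w))
    (append_right : ∀ w, InStar x y w → motive w → motive (y ++ w)) : motive w := by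
  obtain ⟨L, hL, rfl⟩ := h
  induction L with
  | nil => exact nil
  | cons u L ih =>
    have hL' : ∀ v ∈ L, v = x ∨ v = y := fun v hv => hL v (List.mem_cons_of_mem _ hv)
    rw [List.flatten_cons]
    rcases hL u List.mem_cons_self with rfl | rfl
    · exact append_left _ ⟨L, hL', rfl⟩ (ih hL')
    · exact append_right _ ⟨L, hL', rfl⟩ (ih hL')

theorem nil : InStar x y [] := ⟨[], by simp, rfl⟩

theorem append_left (h : InStar x y w) : InStar x y (x ++ w) := by
  obtain ⟨L, hL, rfl⟩ := h
  exact ⟨x :: L, by simpa using hL, rfl⟩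

theorem append_right (h : InStar x y w) : InStar x y (y ++ w) := by
  obtain ⟨L, hL, rfl⟩ := h
  exact ⟨y :: L, by simpa using hL, rfl⟩

theorem swap (h : InStar x y w) : InStar y x w := by
  obtain ⟨L, hL, rfl⟩ := h
  exact ⟨L, fun u hu => (hL u hu).symm, rfl⟩

theorem of_append (h : InStar x (x ++ t) w) : InStar x t w :=
  h.induction_on nil (fun _ _ => append_left)
    (fun w _ hw => by simpa using hw.append_right.append_left)

theorem exists_eq_append_of_ne_nil (h : InStar x (x ++ t) w) (hw : w ≠ []) :
    ∃ w', InStar x t w' ∧ w = x ++ w' :=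
  h.induction_on (fun h => absurd rfl h) (fun w hw' _ _ => ⟨w, hw'.of_append, rfl⟩)
    (fun w hw' _ _ => ⟨t ++ w, hw'.of_append.append_right, by simp⟩) hw

end InStar

theorem append_comm_of_append_eq_append_of_inStar {σ : Type*} {x y u v : List σ} (hx : x ≠ [])
    (hy : y ≠ []) (hu : InStar x y u) (hv : InStar x y v) (h : x ++ u = y ++ v) :
    x ++ y = y ++ x := by
  induction hn : (x ++ u).length using Nat.strong_induction_on generalizing x y u v with
  | _ n ih =>
  wlog hle : x.length ≤ y.length generalizing x y u v
  · exact (this hy hx hv.swap hu.swap h.symm (by rw [← h, hn]) (le_of_not_ge hle)).symm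
  obtain ⟨t, rfl⟩ : x <+: y :=
    List.prefix_of_prefix_length_le (h ▸ List.prefix_append x u) (List.prefix_append y v) hle
  rcases eq_or_ne t [] with rfl | ht
  · simp
  have hut : u = t ++ v := by simpa using h
  obtain ⟨u', hu', rfl⟩ := hu.exists_eq_append_of_ne_nil (by simp [hut, ht])
  have hxt : x ++ t = t ++ x :=
    ih _ (by simp [← hn, List.length_pos_iff.mpr hx]) hx ht hu' hv.of_append hut rfl
  rw [List.append_assoc, hxt]

theorem stmt3 {σ : Type*} (x y : List σ) (hx : x ≠ []) (hy : y ≠ [])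
    (h : ∃ z : List σ, (∃ w, InStar x y w ∧ z = x ++ w) ∧ (∃ w, InStar x y w ∧ z = y ++ w)) :
    x ++ y = y ++ x := by
  obtain ⟨_, ⟨u, hu, rfl⟩, v, hv, h⟩ := h
  exact append_comm_of_append_eq_append_of_inStar hx hy hu hv h
end

section
/- Let A be an m₁×n₁ array and B an m₂×n₂ array over an alphabet Σ (with m₁,n₁,m₂,n₂ positive). If there exist positive integers p₁,q₁,p₂,q₂ such that A^{p₁×q₁} = B^{p₂×q₂}, then there exist a nonempty array C and positive integers r₁,s₁,r₂,s₂ such that A = C^{r₁×s₁} and B = C^{r₂×s₂}. -/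
/-!
Extend `A` periodically to a function `g` on `ℕ × ℕ`. Since `A^{p₁×q₁} = B^{p₂×q₂}`,
the periodic extension of `B` is the same `g`, so `g` has vertical periods `m₁, m₂` and
horizontal periods `n₁, n₂`, hence vertical period `gcd m₁ m₂` and horizontal period
`gcd n₁ n₂`. Both `A` and `B` are then repetitions of the `gcd m₁ m₂ × gcd n₁ n₂` corner of `g`.
-/

open Function

theorem Function.Periodic.nat_mod {α : Type*} {f : ℕ → α} {a b : ℕ}
    (ha : Periodic f a) (hb : Periodic f b) : Periodic f (a % b) := fun x => by
  rw [← hb.nat_mul (a / b) (x + a % b), Nat.cast_id, add_assoc, Nat.mod_add_div', ha]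

theorem Function.Periodic.nat_gcd {α : Type*} {f : ℕ → α} {a b : ℕ}
    (ha : Periodic f a) (hb : Periodic f b) : Periodic f (a.gcd b) := by
  revert ha hb
  refine Nat.gcd.induction a b (fun b _ hb => ?_) fun a b _ ih ha hb => ?_
  · rwa [Nat.gcd_zero_left]
  · rw [Nat.gcd_rec]
    exact ih (hb.nat_mod ha) ha

section

variable {σ : Type*} {m n : ℕ}

def arrPeriodicExt (A : Fin m × Fin n → σ) (hm : 0 < m) (hn : 0 < n) (i j : ℕ) : σ :=
  A (⟨i % m, Nat.mod_lt _ hm⟩, ⟨j % n, Nat.mod_lt _ hn⟩)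

variable (A : Fin m × Fin n → σ) (hm : 0 < m) (hn : 0 < n)

theorem arrPeriodicExt_periodic_left (j : ℕ) : Periodic (arrPeriodicExt A hm hn · j) m :=
  fun i => by simp only [arrPeriodicExt, Nat.add_mod_right]

theorem arrPeriodicExt_periodic_right (i : ℕ) : Periodic (arrPeriodicExt A hm hn i) n :=
  fun j => by simp only [arrPeriodicExt, Nat.add_mod_right]

theorem arrPeriodicExt_apply_fin (i : Fin m) (j : Fin n) :
    arrPeriodicExt A hm hn i j = A (i, j) := by
  simp only [arrPeriodicExt, Nat.mod_eq_of_lt i.isLt, Nat.mod_eq_of_lt j.isLt]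

theorem arrRep_apply_eq_arrPeriodicExt {p q : ℕ} (x : Fin (p * m) × Fin (q * n)) :
    arrRep A p q x = arrPeriodicExt A hm hn x.1 x.2 :=
  rfl

theorem arrPeriodicExt_eq_mod_rep {p q : ℕ} (hp : 0 < p) (hq : 0 < q) (i j : ℕ) :
    arrPeriodicExt A hm hn i j =
      arrRep A p q (⟨i % (p * m), Nat.mod_lt _ (Nat.mul_pos hp hm)⟩,
        ⟨j % (q * n), Nat.mod_lt _ (Nat.mul_pos hq hn)⟩) := by
  have hcol := (arrPeriodicExt_periodic_left A hm hn j).nat_mul p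
  have hrow := (arrPeriodicExt_periodic_right A hm hn (i % (p * m))).nat_mul q
  rw [Nat.cast_id] at hcol hrow
  rw [arrRep_apply_eq_arrPeriodicExt A hm hn, hrow.map_mod_nat, hcol.map_mod_nat]

end

theorem arrPeriodicExt_eq_of_arrEq_arrRep {σ : Type*} {m1 n1 m2 n2 : ℕ}
    {A : Fin m1 × Fin n1 → σ} {B : Fin m2 × Fin n2 → σ}
    (hm1 : 0 < m1) (hn1 : 0 < n1) (hm2 : 0 < m2) (hn2 : 0 < n2) {p1 q1 p2 q2 : ℕ}
    (hp1 : 0 < p1) (hq1 : 0 < q1) (hp2 : 0 < p2) (hq2 : 0 < q2)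
    (hAB : arrEq (arrRep A p1 q1) (arrRep B p2 q2)) (i j : ℕ) :
    arrPeriodicExt A hm1 hn1 i j = arrPeriodicExt B hm2 hn2 i j := by
  obtain ⟨hP, hQ, hrep⟩ := hAB
  rw [arrPeriodicExt_eq_mod_rep A hm1 hn1 hp1 hq1, arrPeriodicExt_eq_mod_rep B hm2 hn2 hp2 hq2]
  simp only [← hP, ← hQ]
  exact hrep _ _ _ _ _ _

theorem arrEq_arrRep_of_periodic {σ : Type*} {g : ℕ → ℕ → σ} {d e m n : ℕ}
    (hdm : d ∣ m) (hen : e ∣ n)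
    (hcol : ∀ j, Periodic (g · j) d) (hrow : ∀ i, Periodic (g i) e)
    (A : Fin m × Fin n → σ) (hA : ∀ (i : Fin m) (j : Fin n), A (i, j) = g i j) :
    arrEq A (arrRep (fun x : Fin d × Fin e => g x.1 x.2) (m / d) (n / e)) := by
  refine ⟨(Nat.div_mul_cancel hdm).symm, (Nat.div_mul_cancel hen).symm,
    fun i j _ _ _ _ => ?_⟩
  rw [hA]
  exact ((hcol j).map_mod_nat i).symm.trans ((hrow _).map_mod_nat j).symm

theorem stmt6 {σ : Type*} {m1 n1 m2 n2 : ℕ}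
    (hm1 : 0 < m1) (hn1 : 0 < n1) (hm2 : 0 < m2) (hn2 : 0 < n2)
    (A : Fin m1 × Fin n1 → σ) (B : Fin m2 × Fin n2 → σ)
    (h : ∃ p1 q1 p2 q2 : ℕ, 0 < p1 ∧ 0 < q1 ∧ 0 < p2 ∧ 0 < q2 ∧
      arrEq (arrRep A p1 q1) (arrRep B p2 q2)) :
    ∃ (mc nc : ℕ) (C : Fin mc × Fin nc → σ) (r1 s1 r2 s2 : ℕ),
      0 < mc ∧ 0 < nc ∧ 0 < r1 ∧ 0 < s1 ∧ 0 < r2 ∧ 0 < s2 ∧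
      arrEq A (arrRep C r1 s1) ∧ arrEq B (arrRep C r2 s2) := by
  obtain ⟨p1, q1, p2, q2, hp1, hq1, hp2, hq2, hrep⟩ := h
  have hext : arrPeriodicExt A hm1 hn1 = arrPeriodicExt B hm2 hn2 := by
    funext i j
    exact arrPeriodicExt_eq_of_arrEq_arrRep hm1 hn1 hm2 hn2 hp1 hq1 hp2 hq2 hrep i j
  have hcol (j : ℕ) : Periodic (arrPeriodicExt A hm1 hn1 · j) (m1.gcd m2) :=
    (arrPeriodicExt_periodic_left A hm1 hn1 j).nat_gcd
      (by rw [hext]; exact arrPeriodicExt_periodic_left B hm2 hn2 j)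
  have hrow (i : ℕ) : Periodic (arrPeriodicExt A hm1 hn1 i) (n1.gcd n2) :=
    (arrPeriodicExt_periodic_right A hm1 hn1 i).nat_gcd
      (by rw [hext]; exact arrPeriodicExt_periodic_right B hm2 hn2 i)
  have hd := Nat.gcd_pos_of_pos_left m2 hm1
  have he := Nat.gcd_pos_of_pos_left n2 hn1
  exact ⟨_, _, fun x => arrPeriodicExt A hm1 hn1 x.1 x.2, _, _, _, _, hd, he,
    Nat.div_pos (Nat.gcd_le_left _ hm1) hd, Nat.div_pos (Nat.gcd_le_left _ hn1) he,
    Nat.div_pos (Nat.gcd_le_right _ hm2) hd, Nat.div_pos (Nat.gcd_le_right _ hn2) he,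
    arrEq_arrRep_of_periodic (Nat.gcd_dvd_left _ _) (Nat.gcd_dvd_left _ _) hcol hrow A
      fun i j => (arrPeriodicExt_apply_fin A hm1 hn1 i j).symm,
    arrEq_arrRep_of_periodic (Nat.gcd_dvd_right _ _) (Nat.gcd_dvd_right _ _) hcol hrow B
      fun i j => by rw [hext, arrPeriodicExt_apply_fin]⟩
end

section
/- If A = C^{r₁×s₁} and B = C^{r₂×s₂} for a nonempty array C and positive integers r₁,s₁,r₂,s₂, then there exist positive integers t₁,u₁,t₂,u₂ such that A^{t₁×u₁} ⊖ B^{t₂×u₂} = B^{t₂×u₂} ⊖ A^{t₁×u₁}, where ⊖ denotes horizontal concatenation of arrays with equal numbers of rows. -/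
namespace arrEq

variable {σ : Type*} {m n m' n' m'' n'' : ℕ}

theorem symm {A : Fin m × Fin n → σ} {B : Fin m' × Fin n' → σ} (h : arrEq A B) :
    arrEq B A :=
  ⟨h.1.symm, h.2.1.symm, fun i j h1 h2 h1' h2' => (h.2.2 i j h1' h2' h1 h2).symm⟩

theorem trans {A : Fin m × Fin n → σ} {B : Fin m' × Fin n' → σ} {C : Fin m'' × Fin n'' → σ}
    (hAB : arrEq A B) (hBC : arrEq B C) : arrEq A C := by
  obtain ⟨hm, hn, hAB⟩ := hAB
  obtain ⟨hm', hn', hBC⟩ := hBC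
  refine ⟨hm.trans hm', hn.trans hn', fun i j h1 h2 h1' h2' => ?_⟩
  exact (hAB i j h1 h2 (hm ▸ h1) (hn ▸ h2)).trans (hBC i j _ _ h1' h2')

theorem arrRep {A : Fin m × Fin n → σ} {B : Fin m' × Fin n' → σ} (h : arrEq A B) (p q : ℕ) :
    arrEq (_root_.arrRep A p q) (_root_.arrRep B p q) := by
  obtain ⟨rfl, rfl, h⟩ := h
  exact ⟨rfl, rfl, fun _ _ _ _ _ _ => h ..⟩

theorem hcat {m₂ n₂ m₂' n₂' : ℕ} {A : Fin m × Fin n → σ} {A' : Fin m' × Fin n' → σ}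
    {B : Fin m₂ × Fin n₂ → σ} {B' : Fin m₂' × Fin n₂' → σ} (hA : arrEq A A') (hB : arrEq B B')
    (h : m = m₂) (h' : m' = m₂') : arrEq (hcat h A B) (hcat h' A' B') := by
  obtain ⟨rfl, rfl, hA⟩ := hA
  obtain ⟨rfl, rfl, hB⟩ := hB
  refine ⟨rfl, rfl, fun i j h1 h2 h1' h2' => ?_⟩
  simp only [_root_.hcat]
  split_ifs
  · exact hA ..
  · exact hB ..

end arrEq

theorem arrEq_arrRep_arrRep {σ : Type*} {m n : ℕ} (C : Fin m × Fin n → σ) (r s p q : ℕ) :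
    arrEq (arrRep (arrRep C r s) p q) (arrRep C (p * r) (q * s)) := by
  refine ⟨by ring, by ring, fun i j _ _ _ _ => ?_⟩
  simp only [arrRep, Nat.mod_mod_of_dvd _ (dvd_mul_left _ _)]

theorem arrEq_arrRep_arrRep_comm {σ : Type*} {m n : ℕ} (C : Fin m × Fin n → σ)
    (r s p q : ℕ) : arrEq (arrRep (arrRep C r s) p q) (arrRep (arrRep C p q) r s) := by
  have h := arrEq_arrRep_arrRep C r s p q
  rw [Nat.mul_comm p r, Nat.mul_comm q s] at h
  exact h.trans (arrEq_arrRep_arrRep C p q r s).symm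

theorem stmt7_general {σ : Type*} {m1 n1 m2 n2 mc nc : ℕ}
    (A : Fin m1 × Fin n1 → σ) (B : Fin m2 × Fin n2 → σ) (C : Fin mc × Fin nc → σ)
    (r1 s1 r2 s2 : ℕ) (hr1 : 0 < r1) (hs1 : 0 < s1) (hr2 : 0 < r2) (hs2 : 0 < s2)
    (hA : arrEq A (arrRep C r1 s1)) (hB : arrEq B (arrRep C r2 s2)) :
    ∃ t1 u1 t2 u2 : ℕ, 0 < t1 ∧ 0 < u1 ∧ 0 < t2 ∧ 0 < u2 ∧
      ∃ h : t1 * m1 = t2 * m2,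
        arrEq (hcat h (arrRep A t1 u1) (arrRep B t2 u2))
              (hcat h.symm (arrRep B t2 u2) (arrRep A t1 u1)) := by
  have hAB : arrEq (arrRep A r2 s2) (arrRep B r1 s1) :=
    ((hA.arrRep r2 s2).trans (arrEq_arrRep_arrRep_comm C r1 s1 r2 s2)).trans
      (hB.arrRep r1 s1).symm
  exact ⟨r2, s2, r1, s1, hr2, hs2, hr1, hs1, hAB.1, hAB.hcat hAB.symm hAB.1 hAB.1.symm⟩

theorem stmt7 {σ : Type*} {m1 n1 m2 n2 mc nc : ℕ} (hmc : 0 < mc) (hnc : 0 < nc)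
    (A : Fin m1 × Fin n1 → σ) (B : Fin m2 × Fin n2 → σ) (C : Fin mc × Fin nc → σ)
    (r1 s1 r2 s2 : ℕ) (hr1 : 0 < r1) (hs1 : 0 < s1) (hr2 : 0 < r2) (hs2 : 0 < s2)
    (hA : arrEq A (arrRep C r1 s1)) (hB : arrEq B (arrRep C r2 s2)) :
    ∃ t1 u1 t2 u2 : ℕ, 0 < t1 ∧ 0 < u1 ∧ 0 < t2 ∧ 0 < u2 ∧
      ∃ h : t1 * m1 = t2 * m2,
        arrEq (hcat h (arrRep A t1 u1) (arrRep B t2 u2))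
              (hcat h.symm (arrRep B t2 u2) (arrRep A t1 u1)) :=
  stmt7_general A B C r1 s1 r2 s2 hr1 hs1 hr2 hs2 hA hB
end

section
/- Let A be an m₁×n₁ array and B an m₂×n₂ array. If there exist positive integers t₁,u₁,t₂,u₂ such that A^{t₁×u₁} and B^{t₂×u₂} have the same number of rows and their horizontal concatenations in both orders are equal (A^{t₁×u₁} ⊚ B^{t₂×u₂} = B^{t₂×u₂} ⊚ A^{t₁×u₁}), then there exist positive integers p₁,q₁,p₂,q₂ with A^{p₁×q₁} = B^{p₂×q₂}. -/
/-!
A row of `A^{t₁×u₁} ⊚ B^{t₂×u₂} = B^{t₂×u₂} ⊚ A^{t₁×u₁}` says that the corresponding rows `x`, `y`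
of the two blocks commute, `xy = yx`, and then `x^ω = y^ω`. Hence every row of `A`, continued
periodically to the right, agrees with the corresponding row of `B` continued periodically, and
`A^{t₁×n₂} = B^{t₂×n₁}`.
-/

open Function

section InfiniteWords

variable {α : Type*} {f g : ℕ → α} {a b : ℕ}

/-- With `x`, `y` the prefixes of length `a`, `b` of `f = x^ω` and `g = y^ω`, the hypothesis `h`
says `xy = yx`. -/
theorem eq_of_periodic_of_append_comm (ha : 0 < a) (hb : 0 < b)
    (hf : Periodic f a) (hg : Periodic g b)
    (h : ∀ j < a + b, (if j < a then f j else g (j - a)) = if j < b then g j else f (j - b)) :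
    f = g := by
  have hf_sub : ∀ j, a ≤ j → f j = f (j - a) := fun j hj => by
    rw [← hf (j - a), Nat.sub_add_cancel hj]
  have hg_sub : ∀ j, b ≤ j → g j = g (j - b) := fun j hj => by
    rw [← hg (j - b), Nat.sub_add_cancel hj]
  funext j
  induction j using Nat.strong_induction_on with
  | _ j ih =>
  rcases lt_or_ge j a with hja | hja <;> rcases lt_or_ge j b with hjb | hjb
  · simpa [hja, hjb] using h j (by omega)
  · calc f j = f (j - b) := by simpa [hja, Nat.not_lt.2 hjb] using h j (by omega)
      _ = g (j - b) := ih _ (by omega)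
      _ = g j := (hg_sub j hjb).symm
  · calc f j = f (j - a) := hf_sub j hja
      _ = g (j - a) := ih _ (by omega)
      _ = g j := by simpa [Nat.not_lt.2 hja, hjb] using h j (by omega)
  · have hcross : g (j - a) = f (j - b) := by
      rcases lt_or_ge j (a + b) with hjab | hjab
      · simpa [Nat.not_lt.2 hja, Nat.not_lt.2 hjb] using h j hjab
      · calc g (j - a) = g (j - a - b) := hg_sub _ (by omega)
          _ = f (j - a - b) := (ih _ (by omega)).symm
          _ = f (j - b) := by rw [hf_sub (j - b) (by omega), Nat.sub_right_comm]
    calc f j = f (j - a) := hf_sub j hja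
      _ = g (j - a) := ih _ (by omega)
      _ = f (j - b) := hcross
      _ = g (j - b) := ih _ (by omega)
      _ = g j := (hg_sub j hjb).symm

end InfiniteWords

section Arrays

variable {σ : Type*} {m n : ℕ}

def periodicRow (A : Fin m × Fin n → σ) (hn : 0 < n) (i : Fin m) (j : ℕ) : σ :=
  A (i, ⟨j % n, Nat.mod_lt _ hn⟩)

theorem periodicRow_periodic (A : Fin m × Fin n → σ) (hn : 0 < n) (i : Fin m) :
    Periodic (periodicRow A hn i) n := fun j => by
  simp only [periodicRow, Nat.add_mod_right]

theorem periodicRow_of_lt (A : Fin m × Fin n → σ) (hn : 0 < n) (i : Fin m) {j : ℕ}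
    (hj : j < n) : periodicRow A hn i j = A (i, ⟨j, hj⟩) := by
  simp only [periodicRow, Nat.mod_eq_of_lt hj]

theorem periodicRow_arrRep (A : Fin m × Fin n → σ) (hn : 0 < n) {p q : ℕ}
    (hqn : 0 < q * n) (i : Fin (p * m)) :
    periodicRow (arrRep A p q) hqn i =
      periodicRow A hn ⟨i % m, Nat.mod_lt _ (fin_pos_of_mul i)⟩ := by
  funext j
  simp only [periodicRow, arrRep, Nat.mod_mod_of_dvd j (dvd_mul_left n q)]

theorem periodicRow_eq_of_hcat_comm {r r' a b : ℕ} (ha : 0 < a) (hb : 0 < b)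
    {X : Fin r × Fin a → σ} {Y : Fin r' × Fin b → σ} (hr : r = r')
    (hXY : arrEq (hcat hr X Y) (hcat hr.symm Y X)) (i : Fin r) :
    periodicRow X ha i = periodicRow Y hb (Fin.cast hr i) := by
  refine eq_of_periodic_of_append_comm ha hb (periodicRow_periodic X ha i)
    (periodicRow_periodic Y hb _) fun j hj => ?_
  have hij := hXY.2.2 i j i.isLt (by omega) (hr ▸ i.isLt) (by omega)
  simp only [hcat] at hij
  split_ifs at hij ⊢ <;> convert hij using 2 <;> exact periodicRow_of_lt _ _ _ (by omega)

end Arrays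

theorem stmt8_general {σ : Type*} {m1 n1 m2 n2 : ℕ}
    (hn1 : 0 < n1) (hn2 : 0 < n2)
    (A : Fin m1 × Fin n1 → σ) (B : Fin m2 × Fin n2 → σ)
    (h : ∃ t1 u1 t2 u2 : ℕ, 0 < t1 ∧ 0 < u1 ∧ 0 < t2 ∧ 0 < u2 ∧
      ∃ hr : t1 * m1 = t2 * m2,
        arrEq (hcat hr (arrRep A t1 u1) (arrRep B t2 u2))
              (hcat hr.symm (arrRep B t2 u2) (arrRep A t1 u1))) :
    ∃ p1 q1 p2 q2 : ℕ, 0 < p1 ∧ 0 < q1 ∧ 0 < p2 ∧ 0 < q2 ∧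
      arrEq (arrRep A p1 q1) (arrRep B p2 q2) := by
  obtain ⟨t1, u1, t2, u2, ht1, hu1, ht2, hu2, hr, hcomm⟩ := h
  have hrows (i : Fin (t1 * m1)) :
      periodicRow A hn1 ⟨i % m1, Nat.mod_lt _ (fin_pos_of_mul i)⟩ =
        periodicRow B hn2 ⟨i % m2, Nat.mod_lt _ (fin_pos_of_mul (Fin.cast hr i))⟩ := by
    calc periodicRow A hn1 _ = periodicRow (arrRep A t1 u1) (Nat.mul_pos hu1 hn1) i :=
          (periodicRow_arrRep A hn1 _ i).symm
      _ = periodicRow (arrRep B t2 u2) (Nat.mul_pos hu2 hn2) (Fin.cast hr i) :=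
          periodicRow_eq_of_hcat_comm _ _ hr hcomm i
      _ = _ := periodicRow_arrRep B hn2 _ _
  exact ⟨t1, n2, t2, n1, ht1, hn2, ht2, hn1, hr, Nat.mul_comm n2 n1,
    fun i j hi _ _ _ => congrFun (hrows ⟨i, hi⟩) j⟩

theorem stmt8 {σ : Type*} {m1 n1 m2 n2 : ℕ}
    (hm1 : 0 < m1) (hn1 : 0 < n1) (hm2 : 0 < m2) (hn2 : 0 < n2)
    (A : Fin m1 × Fin n1 → σ) (B : Fin m2 × Fin n2 → σ)
    (h : ∃ t1 u1 t2 u2 : ℕ, 0 < t1 ∧ 0 < u1 ∧ 0 < t2 ∧ 0 < u2 ∧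
      ∃ hr : t1 * m1 = t2 * m2,
        arrEq (hcat hr (arrRep A t1 u1) (arrRep B t2 u2))
              (hcat hr.symm (arrRep B t2 u2) (arrRep A t1 u1))) :
    ∃ p1 q1 p2 q2 : ℕ, 0 < p1 ∧ 0 < q1 ∧ 0 < p2 ∧ 0 < q2 ∧
      arrEq (arrRep A p1 q1) (arrRep B p2 q2) :=
  stmt8_general hn1 hn2 A B h
end

section
/- Let A and B be nonempty arrays with the same number of rows. Then A ⊚ B = B ⊚ A (horizontal concatenation) if and only if there exist a nonempty array C and positive integers e, f such that A = C^{1×e} and B = C^{1×f}. -/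
/-! Reading an array column by column turns it into a word over the alphabet of columns
`Fin m → σ`, and horizontal concatenation of arrays with `m` rows into concatenation of words.
So `A ⊚ B = B ⊚ A` says that the column words of `A` and `B` commute, which by the
Lyndon–Schützenberger theorem happens exactly when both are powers of one word, the column word
of `C`. -/

section Words

variable {σ : Type*}

@[simp]
lemma wpow_zero (z : List σ) : wpow z 0 = [] := rfl

lemma wpow_succ (z : List σ) (k : ℕ) : wpow z (k + 1) = z ++ wpow z k := by
  simp [wpow, List.replicate_succ]

lemma wpow_add (z : List σ) (a b : ℕ) : wpow z (a + b) = wpow z a ++ wpow z b := by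
  rw [wpow, wpow, wpow, List.replicate_add, List.flatten_append]

@[simp]
lemma length_wpow (z : List σ) (k : ℕ) : (wpow z k).length = k * z.length := by
  induction k with
  | zero => simp
  | succ k ih => rw [wpow_succ, List.length_append, ih]; ring

lemma getElem_wpow (z : List σ) (k j : ℕ) (h : j < (wpow z k).length) :
    (wpow z k)[j] = z[j % z.length]'(Nat.mod_lt _ (by
      rw [length_wpow] at h; exact Nat.pos_of_mul_pos_left (Nat.zero_lt_of_lt h))) := by
  induction k generalizing j with
  | zero => simp at h
  | succ k ih =>
    simp only [wpow_succ]
    rcases Nat.lt_or_ge j z.length with hj | hj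
    · simp [List.getElem_append_left hj, Nat.mod_eq_of_lt hj]
    · rw [List.getElem_append_right hj, ih]
      simp [Nat.mod_eq_sub_mod hj]

/-- Lyndon–Schützenberger. -/
theorem exists_wpow_of_append_comm {x y : List σ} (h : x ++ y = y ++ x) :
    ∃ (w : List σ) (e f : ℕ), x = wpow w e ∧ y = wpow w f := by
  induction hn : x.length + y.length using Nat.strong_induction_on generalizing x y with
  | _ n ih =>
  wlog hle : x.length ≤ y.length generalizing x y
  · obtain ⟨w, e, f, hy, hx⟩ := this h.symm (by omega) (by omega)
    exact ⟨w, f, e, hx, hy⟩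
  by_cases hx : x = []
  · exact ⟨y, 0, 1, hx, by simp [wpow]⟩
  obtain ⟨z, rfl⟩ : x <+: y :=
    List.prefix_of_prefix_length_le (List.prefix_append x y) (h ▸ List.prefix_append y x) hle
  have hxz : x ++ z = z ++ x := by simpa using h
  obtain ⟨w, e, f, rfl, rfl⟩ := ih _ (by simp [← hn, List.length_pos_iff.2 hx]) hxz rfl
  exact ⟨w, e, e + f, rfl, (wpow_add w e f).symm⟩

end Words

section Arrays

variable {σ : Type*} {m : ℕ}

@[simp]
lemma length_colWord {n : ℕ} (A : Fin m × Fin n → σ) : (colWord A).length = n := by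
  simp [colWord]

@[simp]
lemma getElem_colWord {n : ℕ} (A : Fin m × Fin n → σ) (j : ℕ) (hj : j < (colWord A).length)
    (i : Fin m) : (colWord A)[j] i = A (i, ⟨j, by simpa using hj⟩) :=
  congrFun (List.getElem_ofFn (f := fun (j : Fin n) (i : Fin m) => A (i, j)) _) i

def ofColWord (w : List (Fin m → σ)) : Fin m × Fin w.length → σ :=
  fun p => w[p.2] p.1

lemma colWord_ofColWord (w : List (Fin m → σ)) : colWord (ofColWord w) = w :=
  List.ext_getElem (by simp) fun j _ _ => by ext i; simp [ofColWord]

lemma arrEq_iff_colWord_eq {n n' : ℕ} (A : Fin m × Fin n → σ) (B : Fin m × Fin n' → σ) :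
    arrEq A B ↔ colWord A = colWord B := by
  constructor
  · rintro ⟨-, hn, hAB⟩
    refine List.ext_getElem (by simpa using hn) fun j h h' => ?_
    ext i
    simpa using hAB i j i.isLt (by simpa using h) i.isLt (by simpa using h')
  · intro hAB
    have hn : n = n' := by simpa using congrArg List.length hAB
    refine ⟨rfl, hn, fun i j hi hj _ hj' => ?_⟩
    have := congrFun (List.getElem_of_eq hAB (by simpa using hj)) ⟨i, hi⟩
    simpa using this

lemma colWord_hcat {n1 n2 : ℕ} (A : Fin m × Fin n1 → σ) (B : Fin m × Fin n2 → σ) :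
    colWord (hcat rfl A B) = colWord A ++ colWord B := by
  refine List.ext_getElem (by simp) fun j h _ => ?_
  ext i
  rcases Nat.lt_or_ge j n1 with hj | hj
  · simp [List.getElem_append_left (show j < (colWord A).length by simpa using hj),
      hcat, hj]
  · simp [List.getElem_append_right (show (colWord A).length ≤ j by simpa using hj),
      hcat, Nat.not_lt.2 hj]

lemma arrEq_arrRep_one_iff {n nc : ℕ} (A : Fin m × Fin n → σ) (C : Fin m × Fin nc → σ)
    (e : ℕ) :
    arrEq A (arrRep C 1 e) ↔ colWord A = wpow (colWord C) e := by
  constructor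
  · rintro ⟨-, hn, hAC⟩
    refine List.ext_getElem (by simp [hn]) fun j h h' => ?_
    ext i
    have := hAC i j i.isLt (by simpa using h) (by simp) (by simpa using h')
    simpa [getElem_wpow, arrRep, Nat.mod_eq_of_lt i.isLt] using this
  · intro hAC
    have hn : n = e * nc := by simpa using congrArg List.length hAC
    refine ⟨(one_mul m).symm, hn, fun i j hi hj _ _ => ?_⟩
    have := congrFun (List.getElem_of_eq hAC (by simpa using hj)) ⟨i, hi⟩
    simpa [getElem_wpow, arrRep, Nat.mod_eq_of_lt hi] using this

end Arrays

theorem stmt9 {σ : Type*} {m n1 n2 : ℕ} (hm : 0 < m) (hn1 : 0 < n1) (hn2 : 0 < n2)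
    (A : Fin m × Fin n1 → σ) (B : Fin m × Fin n2 → σ) :
    arrEq (hcat rfl A B) (hcat rfl B A) ↔
      ∃ (mc nc : ℕ) (C : Fin mc × Fin nc → σ) (e f : ℕ),
        0 < mc ∧ 0 < nc ∧ 0 < e ∧ 0 < f ∧
        arrEq A (arrRep C 1 e) ∧ arrEq B (arrRep C 1 f) := by
  simp only [arrEq_iff_colWord_eq, colWord_hcat]
  constructor
  · intro hcomm
    obtain ⟨w, e, f, hA, hB⟩ := exists_wpow_of_append_comm hcomm
    have hn1' : n1 = e * w.length := by simpa using congrArg List.length hA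
    have hn2' : n2 = f * w.length := by simpa using congrArg List.length hB
    refine ⟨m, w.length, ofColWord w, e, f, hm, Nat.pos_of_mul_pos_left (hn1' ▸ hn1),
      Nat.pos_of_mul_pos_right (hn1' ▸ hn1), Nat.pos_of_mul_pos_right (hn2' ▸ hn2), ?_, ?_⟩
    · rwa [arrEq_arrRep_one_iff, colWord_ofColWord]
    · rwa [arrEq_arrRep_one_iff, colWord_ofColWord]
  · rintro ⟨mc, nc, C, e, f, -, -, -, -, hA, hB⟩
    obtain rfl : mc = m := by simpa using hA.1.symm
    rw [arrEq_arrRep_one_iff] at hA hB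
    rw [hA, hB, ← wpow_add, ← wpow_add, add_comm]
end

section
/- Every nonempty array A (of dimension m×n with m,n ≥ 1) can be written as A = C^{i×j} for a unique primitive array C and positive integers i, j. -/
/-!
Extend an `m × n` array `A` cyclically to a function `f : ℕ → ℕ → σ`, so that `A = C^{i×j}`
says exactly that `A` and `C` have the same cyclic extension and `m = i · mc`, `n = j · nc`.
The row periods of `f` are closed under `gcd`, so they are the multiples of a least one `dv`,
and likewise the column periods are the multiples of some `dh`. The `dv × dh` top-left block of
`A` is then primitive, and any primitive `C'` with `A = C'^{i'×j'}` has `dv ∣ mc'`, `dh ∣ nc'`,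
so by primitivity of `C'` its shape is exactly `dv × dh`, and it is that block.
-/

open Function

section NatPeriods

variable {α : Type*} {f : ℕ → α} {p q : ℕ}

theorem Function.Periodic.nat_mod_s12 (hp : Periodic f p) (hq : Periodic f q) :
    Periodic f (q % p) := fun x =>
  calc f (x + q % p) = f (x + q % p + q / p * p) := (hp.nat_mul _ _).symm
    _ = f (x + q) := by rw [add_assoc, Nat.mod_add_div']
    _ = f x := hq x

theorem Function.Periodic.nat_gcd_s12 (hp : Periodic f p) (hq : Periodic f q) :
    Periodic f (Nat.gcd p q) := by
  induction p, q using Nat.gcd.induction with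
  | H0 n => simpa using hq
  | H1 m n _ ih => rw [Nat.gcd_rec]; exact ih (hp.nat_mod_s12 hq) hp

theorem Function.Periodic.exists_period_forall_dvd (hp : 0 < p) (hf : Periodic f p) :
    ∃ d, 0 < d ∧ Periodic f d ∧ ∀ q, Periodic f q → d ∣ q := by
  classical
  have hex : ∃ d, 0 < d ∧ Periodic f d := ⟨p, hp, hf⟩
  obtain ⟨hd, hfd⟩ := Nat.find_spec hex
  refine ⟨Nat.find hex, hd, hfd, fun q hq => Nat.gcd_eq_left_iff_dvd.1 ?_⟩
  exact le_antisymm (Nat.gcd_le_left q hd)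
    (Nat.find_min' hex ⟨Nat.gcd_pos_of_pos_left q hd, hfd.nat_gcd_s12 hq⟩)

end NatPeriods

section Arrays

variable {σ : Type*} {m n m' n' mc nc : ℕ}

def arrCyc (A : Fin m × Fin n → σ) (hm : 0 < m) (hn : 0 < n) (r c : ℕ) : σ :=
  A (⟨r % m, Nat.mod_lt r hm⟩, ⟨c % n, Nat.mod_lt c hn⟩)

def arrBlock (A : Fin m × Fin n → σ) {p q : ℕ} (hp : p ≤ m) (hq : q ≤ n) :
    Fin p × Fin q → σ :=
  fun x => A (Fin.castLE hp x.1, Fin.castLE hq x.2)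

theorem arrCyc_periodic_rows (A : Fin m × Fin n → σ) (hm : 0 < m) (hn : 0 < n) :
    Periodic (arrCyc A hm hn) m := fun r => by
  funext c
  simp only [arrCyc, Nat.add_mod_right]

theorem arrCyc_periodic_cols (A : Fin m × Fin n → σ) (hm : 0 < m) (hn : 0 < n) :
    Periodic (swap (arrCyc A hm hn)) n := fun c => by
  funext r
  simp only [swap, arrCyc, Nat.add_mod_right]

theorem arrEq_iff_arrCyc_eq (A : Fin m × Fin n → σ) (B : Fin m' × Fin n' → σ)
    (hm : 0 < m) (hn : 0 < n) (hm' : 0 < m') (hn' : 0 < n') :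
    arrEq A B ↔ m = m' ∧ n = n' ∧ arrCyc A hm hn = arrCyc B hm' hn' := by
  constructor
  · rintro ⟨rfl, rfl, h⟩
    exact ⟨rfl, rfl, funext fun r => funext fun c => h _ _ _ _ _ _⟩
  · rintro ⟨rfl, rfl, h⟩
    refine ⟨rfl, rfl, fun r c hr hc _ _ => ?_⟩
    simpa [arrCyc, Nat.mod_eq_of_lt hr, Nat.mod_eq_of_lt hc] using congrFun (congrFun h r) c

theorem arrCyc_arrRep (C : Fin mc × Fin nc → σ) {p q : ℕ} (hp : 0 < p * mc) (hq : 0 < q * nc)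
    (hmc : 0 < mc) (hnc : 0 < nc) :
    arrCyc (arrRep C p q) hp hq = arrCyc C hmc hnc := by
  funext r c
  simp only [arrCyc, arrRep, Nat.mod_mod_of_dvd _ (dvd_mul_left _ _)]

theorem arrEq_arrRep_iff (A : Fin m × Fin n → σ) (C : Fin mc × Fin nc → σ) {p q : ℕ}
    (hm : 0 < m) (hn : 0 < n) (hmc : 0 < mc) (hnc : 0 < nc) (hp : 0 < p) (hq : 0 < q) :
    arrEq A (arrRep C p q) ↔ m = p * mc ∧ n = q * nc ∧ arrCyc A hm hn = arrCyc C hmc hnc := by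
  rw [arrEq_iff_arrCyc_eq A _ hm hn (Nat.mul_pos hp hmc) (Nat.mul_pos hq hnc), arrCyc_arrRep]

theorem arrCyc_arrBlock (A : Fin m × Fin n → σ) (hm : 0 < m) (hn : 0 < n) {p q : ℕ}
    (hp : 0 < p) (hq : 0 < q) (hpm : p ≤ m) (hqn : q ≤ n)
    (hrow : Periodic (arrCyc A hm hn) p) (hcol : Periodic (swap (arrCyc A hm hn)) q) :
    arrCyc (arrBlock A hpm hqn) hp hq = arrCyc A hm hn := by
  funext r c
  calc arrCyc (arrBlock A hpm hqn) hp hq r c = arrCyc A hm hn (r % p) (c % q) := by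
        simp only [arrCyc, arrBlock, Fin.castLE_mk,
          Nat.mod_eq_of_lt ((Nat.mod_lt r hp).trans_le hpm),
          Nat.mod_eq_of_lt ((Nat.mod_lt c hq).trans_le hqn)]
    _ = arrCyc A hm hn r (c % q) := congrFun (hrow.map_mod_nat r) _
    _ = arrCyc A hm hn r c := congrFun (hcol.map_mod_nat c) r

theorem arrPrimitive_iff (C : Fin mc × Fin nc → σ) (hmc : 0 < mc) (hnc : 0 < nc) :
    ArrPrimitive C ↔ ∀ p q, 0 < p → 0 < q → p ∣ mc → q ∣ nc →
      Periodic (arrCyc C hmc hnc) p → Periodic (swap (arrCyc C hmc hnc)) q →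
      p = mc ∧ q = nc := by
  constructor
  · intro hC p q hp hq hpd hqd hrow hcol
    have hpm := Nat.le_of_dvd hmc hpd
    have hqn := Nat.le_of_dvd hnc hqd
    obtain ⟨hp1, hq1⟩ := hC p q (mc / p) (nc / q) (arrBlock C hpm hqn)
      (Nat.div_pos hpm hp) (Nat.div_pos hqn hq)
      ((arrEq_arrRep_iff C _ hmc hnc hp hq (Nat.div_pos hpm hp) (Nat.div_pos hqn hq)).2
        ⟨(Nat.div_mul_cancel hpd).symm, (Nat.div_mul_cancel hqd).symm,
          (arrCyc_arrBlock C hmc hnc hp hq hpm hqn hrow hcol).symm⟩)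
    constructor
    · calc p = mc / p * p := by rw [hp1, one_mul]
        _ = mc := Nat.div_mul_cancel hpd
    · calc q = nc / q * q := by rw [hq1, one_mul]
        _ = nc := Nat.div_mul_cancel hqd
  · intro h m' n' p q B hp hq hCB
    have hm' : 0 < m' := Nat.pos_of_mul_pos_left (hCB.1 ▸ hmc)
    have hn' : 0 < n' := Nat.pos_of_mul_pos_left (hCB.2.1 ▸ hnc)
    obtain ⟨hmcB, hncB, hcyc⟩ := (arrEq_arrRep_iff C B hmc hnc hm' hn' hp hq).1 hCB
    obtain ⟨rfl, rfl⟩ := h m' n' hm' hn' (Dvd.intro_left _ hmcB.symm)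
      (Dvd.intro_left _ hncB.symm) (hcyc ▸ arrCyc_periodic_rows B hm' hn')
      (hcyc ▸ arrCyc_periodic_cols B hm' hn')
    exact ⟨(Nat.mul_eq_right hm'.ne').1 hmcB.symm, (Nat.mul_eq_right hn'.ne').1 hncB.symm⟩

end Arrays

theorem stmt12 {σ : Type*} {m n : ℕ} (hm : 0 < m) (hn : 0 < n)
    (A : Fin m × Fin n → σ) :
    ∃ (mc nc : ℕ) (C : Fin mc × Fin nc → σ) (i j : ℕ), 0 < i ∧ 0 < j ∧
      ArrPrimitive C ∧ arrEq A (arrRep C i j) ∧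
      ∀ (mc' nc' : ℕ) (C' : Fin mc' × Fin nc' → σ) (i' j' : ℕ), 0 < i' → 0 < j' →
        ArrPrimitive C' → arrEq A (arrRep C' i' j') →
        arrEq C C' ∧ i = i' ∧ j = j' := by
  obtain ⟨dv, hdv, hrow, hdv_dvd⟩ :=
    (arrCyc_periodic_rows A hm hn).exists_period_forall_dvd hm
  obtain ⟨dh, hdh, hcol, hdh_dvd⟩ :=
    (arrCyc_periodic_cols A hm hn).exists_period_forall_dvd hn
  have hdvm : dv ∣ m := hdv_dvd m (arrCyc_periodic_rows A hm hn)
  have hdhn : dh ∣ n := hdh_dvd n (arrCyc_periodic_cols A hm hn)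
  have hdvm' := Nat.le_of_dvd hm hdvm
  have hdhn' := Nat.le_of_dvd hn hdhn
  have hC := arrCyc_arrBlock A hm hn hdv hdh hdvm' hdhn' hrow hcol
  refine ⟨dv, dh, arrBlock A hdvm' hdhn', m / dv, n / dh, Nat.div_pos hdvm' hdv,
    Nat.div_pos hdhn' hdh, ?_, ?_, ?_⟩
  · rw [arrPrimitive_iff _ hdv hdh, hC]
    exact fun p q _ _ hpd hqd hp hq =>
      ⟨Nat.dvd_antisymm hpd (hdv_dvd p hp), Nat.dvd_antisymm hqd (hdh_dvd q hq)⟩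
  · exact (arrEq_arrRep_iff A _ hm hn hdv hdh (Nat.div_pos hdvm' hdv) (Nat.div_pos hdhn' hdh)).2
      ⟨(Nat.div_mul_cancel hdvm).symm, (Nat.div_mul_cancel hdhn).symm, hC.symm⟩
  · intro mc' nc' C' i' j' hi' hj' hC' hAC'
    have hmc' : 0 < mc' := Nat.pos_of_mul_pos_left (hAC'.1 ▸ hm)
    have hnc' : 0 < nc' := Nat.pos_of_mul_pos_left (hAC'.2.1 ▸ hn)
    obtain ⟨hm', hn', hcyc⟩ := (arrEq_arrRep_iff A C' hm hn hmc' hnc' hi' hj').1 hAC'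
    obtain ⟨rfl, rfl⟩ := (arrPrimitive_iff C' hmc' hnc').1 hC' dv dh hdv hdh
      (hdv_dvd mc' (hcyc ▸ arrCyc_periodic_rows C' hmc' hnc'))
      (hdh_dvd nc' (hcyc ▸ arrCyc_periodic_cols C' hmc' hnc')) (hcyc ▸ hrow) (hcyc ▸ hcol)
    refine ⟨(arrEq_iff_arrCyc_eq _ C' hdv hdh hdv hdh).2 ⟨rfl, rfl, hC.trans hcyc⟩, ?_, ?_⟩
    · exact Nat.eq_of_mul_eq_mul_right hdv (by rw [Nat.div_mul_cancel hdvm, ← hm'])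
    · exact Nat.eq_of_mul_eq_mul_right hdh (by rw [Nat.div_mul_cancel hdhn, ← hn'])
end

section
/- The number of primitive m×n arrays over a k-letter alphabet equals ∑_{d₁ | m} ∑_{d₂ | n} μ(d₁) μ(d₂) k^{mn/(d₁ d₂)}, where μ is the Möbius function. -/
/-!
Extend an `m × n` array periodically to `ℕ × ℕ`. Its row periods are the periods of a point
under the shift of sequences, hence exactly the multiples of a least row period `a ∣ m`, and
likewise for columns with a least period `b ∣ n`. An array is primitive iff `(a, b) = (m, n)`,
and the arrays with least periods `(a, b)` are exactly the repetitions of the primitive `a × b`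
arrays. Hence `k ^ (m n) = ∑_{a ∣ m} ∑_{b ∣ n} P(a, b)`, and Möbius inversion in each variable
gives the formula.
-/

open Function

section Biperiodic

variable {α : Type*}

def seqShift (g : ℕ → α) : ℕ → α := fun i => g (i + 1)

theorem iterate_seqShift (a : ℕ) (g : ℕ → α) : seqShift^[a] g = fun i => g (i + a) := by
  induction a generalizing g with
  | zero => rfl
  | succ a ih =>
    rw [iterate_succ_apply, ih]
    funext i
    simp only [seqShift, Nat.add_assoc]

theorem isPeriodicPt_seqShift_iff {g : ℕ → α} {a : ℕ} :
    IsPeriodicPt seqShift a g ↔ Periodic g a := by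
  rw [IsPeriodicPt, IsFixedPt, iterate_seqShift, funext_iff]
  rfl

def IsBiperiodic (f : ℕ → ℕ → α) (a b : ℕ) : Prop :=
  Periodic f a ∧ Periodic (flip f) b

noncomputable def leastPeriods (f : ℕ → ℕ → α) : ℕ × ℕ :=
  (minimalPeriod seqShift f, minimalPeriod seqShift (flip f))

theorem leastPeriods_dvd_iff {f : ℕ → ℕ → α} {a b : ℕ} :
    (leastPeriods f).1 ∣ a ∧ (leastPeriods f).2 ∣ b ↔ IsBiperiodic f a b := by
  simp only [leastPeriods, IsBiperiodic, ← isPeriodicPt_iff_minimalPeriod_dvd,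
    isPeriodicPt_seqShift_iff]

theorem isBiperiodic_leastPeriods (f : ℕ → ℕ → α) :
    IsBiperiodic f (leastPeriods f).1 (leastPeriods f).2 :=
  leastPeriods_dvd_iff.1 ⟨dvd_rfl, dvd_rfl⟩

theorem isBiperiodic_of_leastPeriods_eq {f : ℕ → ℕ → α} {a b : ℕ}
    (h : leastPeriods f = (a, b)) : IsBiperiodic f a b :=
  leastPeriods_dvd_iff.1 (by simp [h])

theorem leastPeriods_pos {f : ℕ → ℕ → α} {a b : ℕ} (ha : 0 < a) (hb : 0 < b)
    (hf : IsBiperiodic f a b) : 0 < (leastPeriods f).1 ∧ 0 < (leastPeriods f).2 :=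
  ⟨(isPeriodicPt_seqShift_iff.2 hf.1).minimalPeriod_pos ha,
    (isPeriodicPt_seqShift_iff.2 hf.2).minimalPeriod_pos hb⟩

theorem IsBiperiodic.map_mod {f : ℕ → ℕ → α} {a b : ℕ} (hf : IsBiperiodic f a b) (i j : ℕ) :
    f (i % a) (j % b) = f i j := by
  rw [hf.1.map_mod_nat]
  exact congrFun (hf.2.map_mod_nat j) i

theorem IsBiperiodic.of_dvd {f : ℕ → ℕ → α} {a b c d : ℕ} (hf : IsBiperiodic f a b)
    (hac : a ∣ c) (hbd : b ∣ d) : IsBiperiodic f c d :=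
  have h := leastPeriods_dvd_iff.2 hf
  leastPeriods_dvd_iff.1 ⟨h.1.trans hac, h.2.trans hbd⟩

end Biperiodic

section Periodize

variable {α : Type*} {m n a b : ℕ}

def periodize [NeZero m] [NeZero n] (A : Fin m × Fin n → α) (i j : ℕ) : α :=
  A (Fin.ofNat m i, Fin.ofNat n j)

/-- This is `A^{p×q}` when `m = p a`, `n = q b`, and the upper left `m × n` corner of `A`
when `m ≤ a`, `n ≤ b`. -/
def resize [NeZero a] [NeZero b] (A : Fin a × Fin b → α) : Fin m × Fin n → α :=
  fun x => periodize A x.1 x.2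

variable [NeZero m] [NeZero n]

theorem periodize_val (A : Fin m × Fin n → α) (x : Fin m × Fin n) : periodize A x.1 x.2 = A x := by
  simp [periodize]

theorem periodize_injective : Injective (periodize : (Fin m × Fin n → α) → ℕ → ℕ → α) :=
  fun A B h => funext fun x => by rw [← periodize_val A, ← periodize_val B, h]

theorem isBiperiodic_periodize (A : Fin m × Fin n → α) : IsBiperiodic (periodize A) m n :=
  ⟨fun i => funext fun j => by simp only [periodize, Fin.ofNat, Nat.add_mod_right],
    fun j => funext fun i => by simp only [flip, periodize, Fin.ofNat, Nat.add_mod_right]⟩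

theorem periodize_resize [NeZero a] [NeZero b] {A : Fin a × Fin b → α}
    (hA : IsBiperiodic (periodize A) m n) :
    periodize (resize A : Fin m × Fin n → α) = periodize A := by
  funext i j
  change periodize A (Fin.ofNat m i).val (Fin.ofNat n j).val = periodize A i j
  rw [Fin.val_ofNat, Fin.val_ofNat, hA.map_mod]

theorem resize_resize {c d : ℕ} [NeZero c] [NeZero d] {C : Fin c × Fin d → α}
    (hC : IsBiperiodic (periodize C) m n) :
    (resize (resize C : Fin m × Fin n → α) : Fin c × Fin d → α) = C := by
  have hresize := periodize_resize hC
  refine periodize_injective ?_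
  rw [periodize_resize (hresize ▸ isBiperiodic_periodize C), hresize]

end Periodize

section Primitive

variable {α : Type*} {m n : ℕ} [NeZero m] [NeZero n]

theorem periodize_eq_of_arrEq_arrRep {m' n' p q : ℕ} [NeZero m'] [NeZero n']
    {A : Fin m × Fin n → α} {B : Fin m' × Fin n' → α} (h : arrEq A (arrRep B p q)) :
    periodize A = periodize B := by
  obtain ⟨hm, hn, hAB⟩ := h
  funext i j
  have hi := Nat.mod_lt i (NeZero.pos m)
  have hj := Nat.mod_lt j (NeZero.pos n)
  refine (hAB (i % m) (j % n) hi hj (hm ▸ hi) (hn ▸ hj)).trans ?_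
  simp only [arrRep, periodize, Fin.ofNat, Nat.mod_mod_of_dvd _ (Dvd.intro_left p hm.symm),
    Nat.mod_mod_of_dvd _ (Dvd.intro_left q hn.symm)]

theorem arrEq_arrRep_resize {a b : ℕ} (ha : a ∣ m) (hb : b ∣ n) {A : Fin m × Fin n → α}
    (hA : IsBiperiodic (periodize A) a b) :
    arrEq A (arrRep (resize A : Fin a × Fin b → α) (m / a) (n / b)) := by
  refine ⟨(Nat.div_mul_cancel ha).symm, (Nat.div_mul_cancel hb).symm, fun i j hi hj _ _ => ?_⟩
  change A _ = periodize A (i % a) (j % b)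
  rw [hA.map_mod, ← periodize_val A]

theorem arrPrimitive_iff_leastPeriods (A : Fin m × Fin n → α) :
    ArrPrimitive A ↔ leastPeriods (periodize A) = (m, n) := by
  obtain ⟨ha, hb⟩ := leastPeriods_dvd_iff.2 (isBiperiodic_periodize A)
  constructor
  · intro hA
    have hpos := leastPeriods_pos (NeZero.pos m) (NeZero.pos n) (isBiperiodic_periodize A)
    obtain ⟨hp, hq⟩ := hA _ _ _ _ _ (Nat.div_pos (Nat.le_of_dvd (NeZero.pos m) ha) hpos.1)
      (Nat.div_pos (Nat.le_of_dvd (NeZero.pos n) hb) hpos.2)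
      (arrEq_arrRep_resize ha hb (isBiperiodic_leastPeriods _))
    exact Prod.ext (Nat.eq_of_dvd_of_div_eq_one ha hp) (Nat.eq_of_dvd_of_div_eq_one hb hq)
  · intro h m' n' p q B _ _ hAB
    have : NeZero m' := ⟨by rintro rfl; exact NeZero.ne m hAB.1⟩
    have : NeZero n' := ⟨by rintro rfl; exact NeZero.ne n hAB.2.1⟩
    have hper := periodize_eq_of_arrEq_arrRep hAB ▸ isBiperiodic_periodize B
    obtain ⟨hm', hn'⟩ := h ▸ leastPeriods_dvd_iff.2 hper
    obtain ⟨hm, hn, -⟩ := hAB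
    rw [Nat.dvd_antisymm (Dvd.intro_left p hm.symm) hm'] at hm
    rw [Nat.dvd_antisymm (Dvd.intro_left q hn.symm) hn'] at hn
    exact ⟨(Nat.mul_eq_right (NeZero.ne m)).1 hm.symm, (Nat.mul_eq_right (NeZero.ne n)).1 hn.symm⟩

end Primitive

section Count

variable {α : Type*} {m n : ℕ} [NeZero m] [NeZero n]

def leastPeriodsFiberEquiv {a b : ℕ} [NeZero a] [NeZero b] (ha : a ∣ m) (hb : b ∣ n) :
    {A : Fin m × Fin n → α // leastPeriods (periodize A) = (a, b)} ≃
      {B : Fin a × Fin b → α // ArrPrimitive B} where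
  toFun A := ⟨resize A.1, by
    rw [arrPrimitive_iff_leastPeriods, periodize_resize (isBiperiodic_of_leastPeriods_eq A.2), A.2]⟩
  invFun B := ⟨resize B.1, by
    rw [periodize_resize ((isBiperiodic_periodize B.1).of_dvd ha hb),
      ← arrPrimitive_iff_leastPeriods]
    exact B.2⟩
  left_inv A := Subtype.ext (resize_resize (isBiperiodic_of_leastPeriods_eq A.2))
  right_inv B := Subtype.ext (resize_resize ((isBiperiodic_periodize B.1).of_dvd ha hb))

variable (α m n) in
theorem card_fun_eq_sum_card_arrPrimitive [Fintype α] :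
    Fintype.card α ^ (m * n) = ∑ a ∈ m.divisors, ∑ b ∈ n.divisors,
      Nat.card {B : Fin a × Fin b → α // ArrPrimitive B} := by
  classical
  have hmaps (A : Fin m × Fin n → α) :
      leastPeriods (periodize A) ∈ m.divisors ×ˢ n.divisors := by
    obtain ⟨ha, hb⟩ := leastPeriods_dvd_iff.2 (isBiperiodic_periodize A)
    simp [ha, hb, NeZero.ne]
  calc Fintype.card α ^ (m * n) = Fintype.card (Fin m × Fin n → α) := by simp
    _ = ∑ p ∈ m.divisors ×ˢ n.divisors,
          Nat.card {A : Fin m × Fin n → α // leastPeriods (periodize A) = p} := by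
      rw [← Finset.card_univ,
        Finset.card_eq_sum_card_fiberwise fun A _ => Finset.mem_coe.2 (hmaps A)]
      refine Finset.sum_congr rfl fun p _ => ?_
      rw [Nat.card_eq_fintype_card, Fintype.card_subtype]
    _ = _ := by
      rw [Finset.sum_product]
      refine Finset.sum_congr rfl fun a ha => Finset.sum_congr rfl fun b hb => ?_
      have : NeZero a := ⟨(Nat.pos_of_mem_divisors ha).ne'⟩
      have : NeZero b := ⟨(Nat.pos_of_mem_divisors hb).ne'⟩
      exact Nat.card_congr (leastPeriodsFiberEquiv (Nat.dvd_of_mem_divisors ha)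
        (Nat.dvd_of_mem_divisors hb))

end Count

section MoebiusInversion

open ArithmeticFunction
open scoped ArithmeticFunction.Moebius

variable {R : Type*} [AddCommGroup R]

theorem sum_divisors_moebius_smul_eq {f g : ℕ → R} (h : ∀ n > 0, ∑ i ∈ n.divisors, f i = g n)
    {n : ℕ} (hn : 0 < n) : ∑ d ∈ n.divisors, μ d • g (n / d) = f n := by
  rw [← Nat.sum_divisorsAntidiagonal fun d e => μ d • g e]
  exact sum_eq_iff_sum_smul_moebius_eq.1 h n hn

theorem sum_divisors_sum_divisors_moebius_smul_eq {f g : ℕ → ℕ → R}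
    (h : ∀ m > 0, ∀ n > 0, ∑ a ∈ m.divisors, ∑ b ∈ n.divisors, f a b = g m n)
    {m n : ℕ} (hm : 0 < m) (hn : 0 < n) :
    ∑ d₁ ∈ m.divisors, ∑ d₂ ∈ n.divisors, (μ d₁ * μ d₂) • g (m / d₁) (n / d₂) = f m n := by
  have inner (n : ℕ) (hn : 0 < n) :
      ∑ d₁ ∈ m.divisors, μ d₁ • g (m / d₁) n = ∑ b ∈ n.divisors, f m b :=
    sum_divisors_moebius_smul_eq (fun m hm => h m hm n hn) hm
  rw [← sum_divisors_moebius_smul_eq (fun n hn => (inner n hn).symm) hn, Finset.sum_comm]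
  simp only [Finset.smul_sum, mul_smul]
  exact Finset.sum_congr rfl fun _ _ => Finset.sum_congr rfl fun _ _ => smul_comm _ _ _

end MoebiusInversion

theorem stmt13 (k m n : ℕ) (hm : 0 < m) (hn : 0 < n) :
    (Nat.card {A : Fin m × Fin n → Fin k // ArrPrimitive A} : ℤ) =
      ∑ d1 ∈ m.divisors, ∑ d2 ∈ n.divisors,
        ArithmeticFunction.moebius d1 * ArithmeticFunction.moebius d2 *
          (k : ℤ) ^ (m * n / (d1 * d2)) := by
  have hcount (m : ℕ) (hm : 0 < m) (n : ℕ) (hn : 0 < n) :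
      ∑ a ∈ m.divisors, ∑ b ∈ n.divisors,
        (Nat.card {B : Fin a × Fin b → Fin k // ArrPrimitive B} : ℤ) = (k : ℤ) ^ (m * n) := by
    have : NeZero m := ⟨hm.ne'⟩
    have : NeZero n := ⟨hn.ne'⟩
    exact_mod_cast (Fintype.card_fin k ▸ card_fun_eq_sum_card_arrPrimitive (Fin k) m n).symm
  rw [← sum_divisors_sum_divisors_moebius_smul_eq hcount hm hn]
  refine Finset.sum_congr rfl fun d₁ hd₁ => Finset.sum_congr rfl fun d₂ hd₂ => ?_
  rw [smul_eq_mul, Nat.div_mul_div_comm (Nat.dvd_of_mem_divisors hd₁) (Nat.dvd_of_mem_divisors hd₂)]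
end

section
/- A nonempty word u is primitive if and only if u is not a factor (contiguous substring) of u_F u_L, where u_F is u with its first letter removed and u_L is u with its last letter removed. -/
/-
A proper occurrence `u ++ u = x ++ u ++ y` with `x, y` nonempty makes `x` a prefix of `u`, say
`u = x ++ a`, and cancelling gives `x ++ a = a ++ x`; by Lyndon–Schützenberger, commuting words
are powers of a common word, so `u` is a proper power. Conversely `v ^ e` with `e ≥ 2` occurs in
`v ^ (2e)` at position `|v|`. Stripping the first and last letter of `u ++ u` turns a proper
occurrence of `u` in `u ++ u` into an occurrence in `u.tail ++ u.dropLast`, and back.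
-/

namespace List

variable {σ : Type*}

theorem wpow_one (z : List σ) : wpow z 1 = z := by
  simp [wpow]

theorem wpow_add (z : List σ) (i j : ℕ) : wpow z (i + j) = wpow z i ++ wpow z j := by
  simp only [wpow, replicate_add, flatten_append]

theorem wpow_eq_nil_iff {z : List σ} {k : ℕ} : wpow z k = [] ↔ k = 0 ∨ z = [] := by
  simp [wpow, or_iff_not_imp_left]

theorem exists_wpow_of_append_comm {x y : List σ} (h : x ++ y = y ++ x) :
    ∃ z i j, x = wpow z i ∧ y = wpow z j := by
  induction hn : x.length + y.length using Nat.strong_induction_on generalizing x y with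
  | _ n ih =>
    rcases eq_or_ne x [] with rfl | hx
    · exact ⟨y, 0, 1, rfl, (wpow_one y).symm⟩
    rcases eq_or_ne y [] with rfl | hy
    · exact ⟨x, 1, 0, (wpow_one x).symm, rfl⟩
    have hx₀ := length_pos_iff.mpr hx
    have hy₀ := length_pos_iff.mpr hy
    rcases le_total x.length y.length with hle | hle
    · obtain ⟨b, rfl⟩ : x <+: y :=
        prefix_of_prefix_length_le (prefix_append x y) (h ▸ prefix_append y x) hle
      have hb : x ++ b = b ++ x := by simpa using h
      obtain ⟨z, i, j, rfl, rfl⟩ := ih _ (by simp only [length_append] at hn; omega) hb rfl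
      exact ⟨z, i, i + j, rfl, (wpow_add z i j).symm⟩
    · obtain ⟨b, rfl⟩ : y <+: x :=
        prefix_of_prefix_length_le (prefix_append y x) (h ▸ prefix_append x y) hle
      have hb : y ++ b = b ++ y := by simpa using h.symm
      obtain ⟨z, i, j, rfl, rfl⟩ := ih _ (by simp only [length_append] at hn; omega) hb rfl
      exact ⟨z, i + j, i, (wpow_add z i j).symm, rfl⟩

theorem not_wPrimitive_append_of_comm {x a : List σ} (hx : x ≠ []) (ha : a ≠ [])
    (h : x ++ a = a ++ x) : ¬ WPrimitive (x ++ a) := by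
  obtain ⟨z, i, j, rfl, rfl⟩ := exists_wpow_of_append_comm h
  have hi : i ≠ 0 := fun hi => hx (wpow_eq_nil_iff.mpr (.inl hi))
  have hj : j ≠ 0 := fun hj => ha (wpow_eq_nil_iff.mpr (.inl hj))
  exact fun hp => hp.2 z (i + j) (by omega) (wpow_add z i j).symm

theorem wPrimitive_iff_not_exists_append_self_eq {u : List σ} (hu : u ≠ []) :
    WPrimitive u ↔ ¬ ∃ x y, x ≠ [] ∧ y ≠ [] ∧ u ++ u = x ++ u ++ y := by
  constructor
  · rintro hp ⟨x, y, hx, hy, h⟩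
    have hlen : x.length + y.length = u.length := by
      have := congrArg length h
      simp only [length_append] at this
      omega
    obtain ⟨a, rfl⟩ : x <+: u :=
      prefix_of_prefix_length_le ⟨u ++ y, by simp [h]⟩ (prefix_append u u)
        (by have := length_pos_iff.mpr hy; omega)
    have hcancel : a ++ x ++ a = x ++ a ++ y := by simpa using h
    have hay : a.length = y.length := by
      simp only [length_append] at hlen
      omega
    have ha : a ≠ [] := ne_nil_of_length_pos (hay ▸ length_pos_iff.mpr hy)
    have hcomm : a ++ x = x ++ a := (append_inj hcancel (by simp [Nat.add_comm])).1
    exact not_wPrimitive_append_of_comm hx ha hcomm.symm hp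
  · intro hocc
    refine ⟨hu, fun v e he huv => hocc ?_⟩
    have hv : v ≠ [] := by
      rintro rfl
      exact hu (huv.trans (wpow_eq_nil_iff.mpr (.inr rfl)))
    refine ⟨v, wpow v (e - 1), hv,
      fun h => hv ((wpow_eq_nil_iff.mp h).resolve_left (by omega)), ?_⟩
    rw [huv, ← wpow_add, show e + e = 1 + e + (e - 1) by omega, wpow_add, wpow_add, wpow_one]

theorem append_self_eq_cons_tail_append_dropLast_concat {u : List σ} (hu : u ≠ []) :
    u ++ u = u.head hu :: (u.tail ++ u.dropLast) ++ [u.getLast hu] := by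
  calc u ++ u = (u.head hu :: u.tail) ++ (u.dropLast ++ [u.getLast hu]) := by
        rw [cons_head_tail, dropLast_append_getLast]
    _ = u.head hu :: (u.tail ++ u.dropLast) ++ [u.getLast hu] := by
        simp only [cons_append, append_assoc]

theorem infix_tail_append_dropLast_iff {u : List σ} (hu : u ≠ []) :
    u <:+: u.tail ++ u.dropLast ↔ ∃ x y, x ≠ [] ∧ y ≠ [] ∧ u ++ u = x ++ u ++ y := by
  rw [append_self_eq_cons_tail_append_dropLast_concat hu]
  constructor
  · rintro ⟨s, t, h⟩
    exact ⟨u.head hu :: s, t ++ [u.getLast hu], cons_ne_nil _ _, by simp, by simp [← h]⟩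
  · rintro ⟨_ | ⟨c, s⟩, y, hx, hy, h⟩
    · exact absurd rfl hx
    obtain ⟨t, d, rfl⟩ := (eq_nil_or_concat' y).resolve_left hy
    exact ⟨s, t, by simpa [← append_assoc] using (congrArg (fun l => l.tail.dropLast) h).symm⟩

end List

theorem stmt17_general {σ : Type*} (u : List σ) :
    WPrimitive u ↔ ¬ u <:+: (u.tail ++ u.dropLast) := by
  rcases eq_or_ne u [] with rfl | hu
  · simp [WPrimitive]
  rw [List.wPrimitive_iff_not_exists_append_self_eq hu, List.infix_tail_append_dropLast_iff hu]

theorem stmt17 {σ : Type*} (u : List σ) (hu : u ≠ []) :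
    WPrimitive u ↔ ¬ u <:+: (u.tail ++ u.dropLast) :=
  stmt17_general u
end

section
/- There exists an m×n array over a two-letter alphabet that is primitive (as a 2D array) but whose row-major reading (concatenating rows into one word of length mn) is not a primitive word; concretely the 2×3 array with rows 'aba' and 'bab' is 2D-primitive while its row-major word 'ababab' is not primitive. -/
/-- The 2×3 array with rows `aba` and `bab` (with `a = 0`, `b = 1`). -/
def abaBab : Fin 2 × Fin 3 → Fin 2 :=
  fun x => ⟨(x.1.val + x.2.val) % 2, by omega⟩

/- Let `m` and `n` be prime. If an `m × n` array is a `p × q` repetition, then `p ∣ m`, so `p = 1` or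
`p = m`; in the latter case the repeated block has a single row and every column of the array is
constant. Symmetrically for `q`. The array with rows `aba`, `bab` has nonconstant rows and columns,
while its row-major word is `(ab)³`. -/

theorem not_wPrimitive_wpow {σ : Type*} (v : List σ) {e : ℕ} (he : 2 ≤ e) :
    ¬ WPrimitive (wpow v e) :=
  fun h => h.2 v e he rfl

section ArrRep

variable {σ : Type*} {m n m' n' p q : ℕ} {M : Fin m × Fin n → σ} {A : Fin m' × Fin n' → σ}

theorem arrEq_arrRep_apply_eq_apply (h : arrEq M (arrRep A p q)) {i i' : Fin m} {j j' : Fin n}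
    (hi : i.val % m' = i'.val % m') (hj : j.val % n' = j'.val % n') : M (i, j) = M (i', j') := by
  obtain ⟨hm, hn, hMA⟩ := h
  rw [hMA i j i.isLt j.isLt (hm ▸ i.isLt) (hn ▸ j.isLt),
    hMA i' j' i'.isLt j'.isLt (hm ▸ i'.isLt) (hn ▸ j'.isLt)]
  simp only [arrRep, hi, hj]

theorem arrEq_arrRep_left_eq_one (h : arrEq M (arrRep A p q)) (hm : m.Prime)
    (hcol : ∃ i i' j, M (i, j) ≠ M (i', j)) : p = 1 := by
  refine (hm.eq_one_or_self_of_dvd p ⟨m', h.1⟩).resolve_right fun hpm => ?_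
  have hm' : m' = 1 := (Nat.mul_eq_left hm.ne_zero).mp (hpm ▸ h.1).symm
  obtain ⟨i, i', j, hne⟩ := hcol
  exact hne (arrEq_arrRep_apply_eq_apply h (by simp only [hm', Nat.mod_one]) rfl)

theorem arrEq_arrRep_right_eq_one (h : arrEq M (arrRep A p q)) (hn : n.Prime)
    (hrow : ∃ i j j', M (i, j) ≠ M (i, j')) : q = 1 := by
  refine (hn.eq_one_or_self_of_dvd q ⟨n', h.2.1⟩).resolve_right fun hqn => ?_
  have hn' : n' = 1 := (Nat.mul_eq_left hn.ne_zero).mp (hqn ▸ h.2.1).symm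
  obtain ⟨i, j, j', hne⟩ := hrow
  exact hne (arrEq_arrRep_apply_eq_apply h rfl (by simp only [hn', Nat.mod_one]))

theorem arrPrimitive_of_prime (hm : m.Prime) (hn : n.Prime)
    (hcol : ∃ i i' j, M (i, j) ≠ M (i', j)) (hrow : ∃ i j j', M (i, j) ≠ M (i, j')) :
    ArrPrimitive M := fun _ _ _ _ _ _ _ h =>
  ⟨arrEq_arrRep_left_eq_one h hm hcol, arrEq_arrRep_right_eq_one h hn hrow⟩

end ArrRep

theorem arrPrimitive_abaBab : ArrPrimitive abaBab :=
  arrPrimitive_of_prime Nat.prime_two Nat.prime_three ⟨0, 1, 0, by decide⟩ ⟨0, 0, 1, by decide⟩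

theorem rowMajor_abaBab : rowMajor abaBab = wpow [0, 1] 3 := by decide

theorem stmt19 :
    (ArrPrimitive abaBab ∧ ¬ WPrimitive (rowMajor abaBab)) ∧
    ∃ (m n : ℕ) (A : Fin m × Fin n → Fin 2), 0 < m ∧ 0 < n ∧
      ArrPrimitive A ∧ ¬ WPrimitive (rowMajor A) := by
  have hnot : ¬ WPrimitive (rowMajor abaBab) :=
    rowMajor_abaBab ▸ not_wPrimitive_wpow [0, 1] (by norm_num)
  exact ⟨⟨arrPrimitive_abaBab, hnot⟩, 2, 3, abaBab, two_pos, three_pos, arrPrimitive_abaBab, hnot⟩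
end
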